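/- arXiv:1410.3933 — 4 statements merged into one kernel-verified Lean document; each statement's English description precedes it below -/
import Mathlib

section
/- Let Γ be a finite group, x ∈ Γ of order n, and let S = {k ∈ (ℤ/nℤ)* : x^k ~ x}. Then the number of elements of Γ that generate a subgroup conjugate to ⟨x⟩ equals |[x]| · φ(n)/|S|, where [x] is the conjugacy class of x and φ is Euler's totient function. -/
open Subgroup Finset

section Helpers

variable {G : Type*} [Group G] [Fintype G]

private lemma orderOf_conj_aux (x g : G) : orderOf (g * x * g⁻¹) = orderOf x := by
  have := orderOf_injective (MulAut.conj g).toMonoidHom (MulEquiv.injective _) x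
  simpa using this

private lemma gen_char {x' y : G} {n : ℕ} (hn : orderOf x' = n) (hpos : 0 < n) :
    Subgroup.zpowers y = Subgroup.zpowers x' ↔
      ∃ k : (ZMod n)ˣ, y = x' ^ ((k : ZMod n).val) := by
  haveI : NeZero n := ⟨hpos.ne'⟩
  constructor
  · intro h
    have hy : y ∈ zpowers x' := h ▸ mem_zpowers y
    obtain ⟨a, ha0⟩ := mem_powers_iff_mem_zpowers.mpr hy
    have ha : x' ^ a = y := ha0
    have hord : orderOf y = n := by
      rw [← Nat.card_zpowers, h, Nat.card_zpowers, hn]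
    have hgcd : Nat.gcd n a = 1 := by
      have h2 := orderOf_pow (n := a) x'
      rw [ha, hord, hn] at h2
      rcases (Nat.div_eq_self.mp h2.symm) with h3 | h3
      · omega
      · exact h3
    have hcop : Nat.Coprime a n := Nat.coprime_comm.mp hgcd
    refine ⟨ZMod.unitOfCoprime a hcop, ?_⟩
    have hval : ((ZMod.unitOfCoprime a hcop : (ZMod n)ˣ) : ZMod n).val = a % n := by
      simp [ZMod.unitOfCoprime, ZMod.val_natCast]
    rw [hval, ← hn, pow_mod_orderOf]
    exact ha.symm
  · rintro ⟨k, rfl⟩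
    have hcop := ZMod.val_coe_unit_coprime k
    have hord : orderOf (x' ^ ((k : ZMod n).val)) = n := by
      rw [orderOf_pow, hn, Nat.Coprime.gcd_eq_one (Nat.coprime_comm.mp hcop), Nat.div_one]
    refine Subgroup.eq_of_le_of_card_ge ?_ ?_
    · exact zpowers_le.mpr ⟨((k : ZMod n).val : ℤ), zpow_natCast x' _⟩
    · rw [Nat.card_zpowers, Nat.card_zpowers, hord, hn]

private lemma pow_val_mul {w : G} {n : ℕ} (hw : orderOf w = n) [NeZero n]
    (a b : (ZMod n)ˣ) :
    (w ^ ((a : ZMod n).val)) ^ ((b : ZMod n).val) = w ^ (((a * b : (ZMod n)ˣ) : ZMod n).val) := by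
  rw [← pow_mul]
  apply pow_eq_pow_iff_modEq.mpr
  rw [hw, Units.val_mul, ZMod.val_mul]
  exact (Nat.mod_modEq _ n).symm

end Helpers

theorem card_generators_of_conjugate_cyclic
    (Γ : Type*) [Group Γ] [Fintype Γ] (x : Γ) (n : ℕ) (hn : orderOf x = n) :
    (Nat.card {y : Γ | ∃ g : Γ, Subgroup.zpowers y =
        Subgroup.map (MulAut.conj g).toMonoidHom (Subgroup.zpowers x)} : ℚ) =
      (Nat.card {y : Γ | IsConj x y} : ℚ) * (Nat.totient n : ℚ) /
        (Nat.card {k : (ZMod n)ˣ | IsConj x (x ^ ((k : ZMod n).val))} : ℚ) := by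
  classical
  have hpos : 0 < n := hn ▸ orderOf_pos x
  haveI : NeZero n := ⟨hpos.ne'⟩
  -- Finset versions
  set T : Finset Γ := univ.filter (fun y => ∃ g : Γ, Subgroup.zpowers y =
      Subgroup.map (MulAut.conj g).toMonoidHom (Subgroup.zpowers x)) with hT
  set C : Finset Γ := univ.filter (fun y => IsConj x y) with hC
  set S : Finset (ZMod n)ˣ := univ.filter (fun k => IsConj x (x ^ ((k : ZMod n).val))) with hS
  have cardT : Nat.card {y : Γ | ∃ g : Γ, Subgroup.zpowers y =
      Subgroup.map (MulAut.conj g).toMonoidHom (Subgroup.zpowers x)} = T.card := by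
    simp only [Nat.card_eq_fintype_card, Set.coe_setOf, hT]
    rw [Fintype.card_subtype]
  have cardC : Nat.card {y : Γ | IsConj x y} = C.card := by
    simp only [Nat.card_eq_fintype_card, Set.coe_setOf, hC]
    rw [Fintype.card_subtype]
  have cardS : Nat.card {k : (ZMod n)ˣ | IsConj x (x ^ ((k : ZMod n).val))} = S.card := by
    simp only [Nat.card_eq_fintype_card, Set.coe_setOf, hS]
    rw [Fintype.card_subtype]
  -- key facts
  have horder_conj : ∀ z : Γ, IsConj x z → orderOf z = n := by
    intro z hz
    obtain ⟨c, hc⟩ := isConj_iff.mp hz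
    rw [← hc, orderOf_conj_aux, hn]
  -- the double counting
  set D : Finset ((ZMod n)ˣ × Γ) := univ.filter (fun p => IsConj x p.2) with hD
  set f : (ZMod n)ˣ × Γ → Γ := fun p => p.2 ^ ((p.1 : ZMod n).val) with hf
  have hmaps : ∀ p ∈ D, f p ∈ T := by
    rintro ⟨k, z⟩ hp
    simp only [hD, mem_filter, mem_univ, true_and] at hp
    obtain ⟨g, hg⟩ := isConj_iff.mp hp
    simp only [hT, mem_filter, mem_univ, true_and, hf]
    refine ⟨g, ?_⟩
    rw [MonoidHom.map_zpowers]
    have hx' : (MulAut.conj g).toMonoidHom x = z := by simpa using hg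
    rw [hx']
    exact (gen_char (horder_conj z hp) hpos).mpr ⟨k, rfl⟩
  have hfiber : ∀ y ∈ T, (D.filter (fun p => f p = y)).card = S.card := by
    intro y hy
    simp only [hT, mem_filter, mem_univ, true_and] at hy
    obtain ⟨g, hg⟩ := hy
    rw [MonoidHom.map_zpowers] at hg
    set x' : Γ := (MulAut.conj g).toMonoidHom x with hx'
    have hx'c : IsConj x x' := isConj_iff.mpr ⟨g, by simp [hx']⟩
    have hox' : orderOf x' = n := horder_conj x' hx'c
    obtain ⟨m, hm⟩ := (gen_char hox' hpos).mp hg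
    refine (Finset.card_bij
      (fun (j : (ZMod n)ˣ) (_ : j ∈ S) => ((m * j⁻¹, x' ^ ((j : ZMod n).val)) : (ZMod n)ˣ × Γ))
      ?_ ?_ ?_).symm
    · -- maps to fiber
      intro j hj
      simp only [hS, mem_filter, mem_univ, true_and] at hj
      simp only [hD, hf, mem_filter, mem_univ, true_and]
      constructor
      · -- IsConj x (x' ^ j.val)
        have h1 : IsConj (x ^ ((j : ZMod n).val)) (x' ^ ((j : ZMod n).val)) := by
          obtain ⟨c, hc⟩ := isConj_iff.mp hx'c
          exact isConj_iff.mpr ⟨c, by rw [← hc, conj_pow]⟩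
        exact hj.trans h1
      · rw [pow_val_mul hox', mul_comm m j⁻¹, ← mul_assoc, mul_inv_cancel, one_mul, hm]
    · -- injective
      intro j₁ h₁ j₂ h₂ heq
      have h2 := congrArg Prod.snd heq
      simp only at h2
      have := pow_eq_pow_iff_modEq.mp h2
      rw [hox'] at this
      have hv : ((j₁ : ZMod n).val) = ((j₂ : ZMod n).val) := by
        have l₁ := ZMod.val_lt (j₁ : ZMod n)
        have l₂ := ZMod.val_lt (j₂ : ZMod n)
        have h3 : ((j₁ : ZMod n).val) % n = ((j₂ : ZMod n).val) % n := this
        rwa [Nat.mod_eq_of_lt l₁, Nat.mod_eq_of_lt l₂] at h3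
      exact Units.ext (ZMod.val_injective n hv)
    · -- surjective
      rintro ⟨k, z⟩ hp
      simp only [hD, hf, mem_filter, mem_univ, true_and] at hp
      obtain ⟨hz, hzk⟩ := hp
      have hoz : orderOf z = n := horder_conj z hz
      have hzz : Subgroup.zpowers z = Subgroup.zpowers x' := by
        have hle : Subgroup.zpowers y ≤ Subgroup.zpowers z :=
          zpowers_le.mpr ⟨(((k : ZMod n).val : ℤ)), by show z ^ (((k : ZMod n).val : ℤ)) = y; rw [zpow_natCast]; exact hzk⟩
        have hoy : orderOf y = n := by
          rw [← Nat.card_zpowers, hg, Nat.card_zpowers, hox']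
        have : Subgroup.zpowers y = Subgroup.zpowers z := by
          refine Subgroup.eq_of_le_of_card_ge hle ?_
          rw [Nat.card_zpowers, Nat.card_zpowers, hoy, hoz]
        rw [← this, hg]
      obtain ⟨j, hj⟩ := (gen_char hox' hpos).mp hzz
      have hjS : j ∈ S := by
        simp only [hS, mem_filter, mem_univ, true_and]
        have h1 : IsConj (x ^ ((j : ZMod n).val)) (x' ^ ((j : ZMod n).val)) := by
          obtain ⟨c, hc⟩ := isConj_iff.mp hx'c
          exact isConj_iff.mpr ⟨c, by rw [← hc, conj_pow]⟩
        rw [← hj] at h1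
        exact (h1.trans hz.symm).symm
      refine ⟨j, hjS, ?_⟩
      have hk : m * j⁻¹ = k := by
        have h1 : x' ^ (((j * k : (ZMod n)ˣ) : ZMod n).val) = x' ^ ((m : ZMod n).val) := by
          rw [← pow_val_mul hox', ← hj, hzk, hm]
        have h2 := pow_eq_pow_iff_modEq.mp h1
        rw [hox'] at h2
        have hv : (((j * k : (ZMod n)ˣ) : ZMod n).val) = ((m : ZMod n).val) := by
          have l₁ := ZMod.val_lt ((j * k : (ZMod n)ˣ) : ZMod n)
          have l₂ := ZMod.val_lt (m : ZMod n)
          have h3 : (((j * k : (ZMod n)ˣ) : ZMod n).val) % n = ((m : ZMod n).val) % n := h2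
          rwa [Nat.mod_eq_of_lt l₁, Nat.mod_eq_of_lt l₂] at h3
        have : (j * k : (ZMod n)ˣ) = m := Units.ext (ZMod.val_injective n hv)
        rw [← this, mul_comm j k, mul_assoc, mul_inv_cancel, mul_one]
      show (m * j⁻¹, x' ^ ((j : ZMod n).val)) = (k, z)
      rw [hk, ← hj]
  -- count D two ways
  have hD1 : D.card = T.card * S.card := by
    rw [Finset.card_eq_sum_card_fiberwise hmaps, Finset.sum_congr rfl hfiber,
      Finset.sum_const, smul_eq_mul]
  have hD2 : D.card = Nat.totient n * C.card := by
    have : D = univ ×ˢ C := by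
      ext ⟨k, z⟩
      simp [hD, hC]
    rw [this, Finset.card_product, Finset.card_univ, ZMod.card_units_eq_totient]
  have hSpos : 0 < S.card := by
    refine Finset.card_pos.mpr ⟨1, ?_⟩
    simp only [hS, mem_filter, mem_univ, true_and]
    have : x ^ ((1 : ZMod n)).val = x := by
      have : ((1 : ZMod n)).val = 1 % n := by
        rw [← Nat.cast_one, ZMod.val_natCast]
      rw [this, ← hn, pow_mod_orderOf, pow_one]
    rw [Units.val_one, this]
  have hkey : T.card * S.card = Nat.totient n * C.card := by rw [← hD1, hD2]
  rw [cardT, cardC, cardS]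
  have hS0 : (S.card : ℚ) ≠ 0 := by positivity
  field_simp
  have := congrArg (Nat.cast : ℕ → ℚ) hkey
  push_cast at this
  linarith [this]
end

section
/- Let Γ be a finite group, x ∈ Γ of order n, and p a prime not dividing |Γ| such that x^p is conjugate to x. Then (1/|Γ|) times the number of pairs (s,t) ∈ Γ² such that ⟨t⟩ is conjugate to ⟨x⟩ and s t s⁻¹ = t^p equals [(ℤ/nℤ)* : S], where S = {k ∈ (ℤ/nℤ)* : x^k ~ x}. -/
open Subgroup

lemma aux_card_conj_set {G : Type*} [Group G] (y τ : G) (h : ∃ g : G, g * y * g⁻¹ = τ) :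
    Nat.card {g : G // g * y * g⁻¹ = τ} = Nat.card (Subgroup.centralizer ({y} : Set G)) := by
  obtain ⟨g₁, hg₁⟩ := h
  apply Nat.card_congr
  refine ⟨fun s => ⟨g₁⁻¹ * s.1, ?_⟩, fun c => ⟨g₁ * c.1, ?_⟩, fun s => by simp, fun c => by simp⟩
  · rcases s with ⟨g, hg⟩
    rw [Subgroup.mem_centralizer_singleton_iff]
    have h2 : g * y * g⁻¹ = g₁ * y * g₁⁻¹ := by rw [hg, hg₁]
    have := congrArg (fun z => g₁⁻¹ * z * g) h2
    simpa [mul_assoc] using this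
  · rcases c with ⟨c, hc⟩
    rw [Subgroup.mem_centralizer_singleton_iff] at hc
    simp only [← hg₁, mul_inv_rev]
    group
    rw [mul_assoc g₁ c y, hc]
    group

lemma aux_card_centralizer_conj {G : Type*} [Group G] (g y : G) :
    Nat.card (Subgroup.centralizer ({g * y * g⁻¹} : Set G)) =
      Nat.card (Subgroup.centralizer ({y} : Set G)) := by
  apply Nat.card_congr
  refine ⟨fun c => ⟨g⁻¹ * c.1 * g, ?_⟩, fun d => ⟨g * d.1 * g⁻¹, ?_⟩, fun c => by simp [mul_assoc], fun d => by simp [mul_assoc]⟩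
  · rcases c with ⟨c, hc⟩
    rw [Subgroup.mem_centralizer_singleton_iff] at hc ⊢
    have := congrArg (fun z => g⁻¹ * z * g) hc
    simpa [mul_assoc] using this
  · rcases d with ⟨d, hd⟩
    rw [Subgroup.mem_centralizer_singleton_iff] at hd ⊢
    have := congrArg (fun z => g * z * g⁻¹) hd
    simpa [mul_assoc] using this

lemma aux_nat_card_sigma {α : Type*} [Fintype α] (F : α → Type*) [∀ a, Fintype (F a)] :
    Nat.card (Σ a, F a) = ∑ a, Nat.card (F a) := by
  simp [Nat.card_eq_fintype_card, Fintype.card_sigma]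

def aux_prod_fix {α β : Type*} (P : α × β → Prop) (b : β) :
    {ab : α × β // P ab ∧ ab.2 = b} ≃ {a : α // P (a, b)} where
  toFun x := ⟨x.1.1, by
    have h : (x.1.1, b) = x.1 := Prod.ext rfl x.2.2.symm
    rw [h]; exact x.2.1⟩
  invFun a := ⟨(a.1, b), ⟨a.2, rfl⟩⟩
  left_inv x := Subtype.ext (Prod.ext rfl x.2.2.symm)
  right_inv a := rfl

theorem mass_coefficient_eq_index
    (Γ : Type*) [Group Γ] [Fintype Γ] (x : Γ) (n : ℕ) (hn : orderOf x = n)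
    (p : ℕ) (hp : p.Prime) (hpΓ : ¬ p ∣ Fintype.card Γ) (hconj : IsConj x (x ^ p)) :
    (1 / (Fintype.card Γ : ℚ)) *
        (Nat.card {st : Γ × Γ | (∃ g : Γ, Subgroup.zpowers st.2 =
            Subgroup.map (MulAut.conj g).toMonoidHom (Subgroup.zpowers x)) ∧
          st.1 * st.2 * st.1⁻¹ = st.2 ^ p} : ℚ) =
      (Nat.card (ZMod n)ˣ : ℚ) /
        (Nat.card {k : (ZMod n)ˣ | IsConj x (x ^ ((k : ZMod n).val))} : ℚ) := by
  classical
  have hn0 : 0 < n := hn ▸ orderOf_pos x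
  haveI : NeZero n := ⟨hn0.ne'⟩
  -- exponent lemmas
  have hmod : ∀ (y : Γ), orderOf y = n → ∀ m : ℕ, y ^ (m % n) = y ^ m := by
    intro y hy m; rw [← hy, pow_mod_orderOf]
  have hmul : ∀ (y : Γ), orderOf y = n → ∀ a b : ZMod n,
      y ^ (a * b).val = (y ^ a.val) ^ b.val := by
    intro y hy a b; rw [ZMod.val_mul, hmod y hy, pow_mul]
  have honep : ∀ (y : Γ), orderOf y = n → y ^ ((1 : ZMod n)).val = y := by
    intro y hy; rw [ZMod.val_one_eq_one_mod, hmod y hy, pow_one]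
  have hcancel : ∀ (y : Γ), orderOf y = n → ∀ k : (ZMod n)ˣ,
      (y ^ ((k : ZMod n)).val) ^ (((k⁻¹ : (ZMod n)ˣ) : ZMod n)).val = y := by
    intro y hy k
    rw [← hmul y hy]
    have : ((k : ZMod n) * ((k⁻¹ : (ZMod n)ˣ) : ZMod n)) = 1 := by
      rw [← Units.val_mul, mul_inv_cancel, Units.val_one]
    rw [this, honep y hy]
  have horder : ∀ g : Γ, orderOf (g * x * g⁻¹) = n := by
    intro g
    have h : SemiconjBy g x (g * x * g⁻¹) := by
      unfold SemiconjBy; group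
    rw [← h.orderOf_eq g, hn]
  -- membership characterization
  have hCiff : ∀ t : Γ,
      (∃ g : Γ, Subgroup.zpowers t
          = Subgroup.map (MulAut.conj g).toMonoidHom (Subgroup.zpowers x)) ↔
      (∃ gk : Γ × (ZMod n)ˣ, gk.1 * x ^ ((gk.2 : ZMod n)).val * gk.1⁻¹ = t) := by
    intro t
    have hgx : ∀ g : Γ, (MulAut.conj g).toMonoidHom x = g * x * g⁻¹ := fun g => rfl
    constructor
    · rintro ⟨g, hg⟩
      rw [MonoidHom.map_zpowers, hgx g] at hg
      have hyo : orderOf (g * x * g⁻¹) = n := horder g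
      have ht1 : t ∈ Subgroup.zpowers (g * x * g⁻¹) := hg ▸ Subgroup.mem_zpowers t
      rw [← mem_powers_iff_mem_zpowers, Submonoid.mem_powers_iff] at ht1
      obtain ⟨m, hm⟩ := ht1
      have hto : orderOf t = n := by
        rw [← Nat.card_zpowers t, hg, Nat.card_zpowers, hyo]
      have hcop : Nat.Coprime m n := by
        have h1 : orderOf ((g * x * g⁻¹) ^ m) = n / n.gcd m := by rw [orderOf_pow, hyo]
        rw [hm, hto] at h1
        have h2 : n.gcd m = 1 := by
          rcases Nat.div_eq_self.mp h1.symm with h | h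
          · omega
          · exact h
        exact Nat.coprime_comm.mp h2
      refine ⟨(g, ZMod.unitOfCoprime m hcop), ?_⟩
      have hv : ((ZMod.unitOfCoprime m hcop : (ZMod n)ˣ) : ZMod n).val = m % n := by
        rw [ZMod.coe_unitOfCoprime, ZMod.val_natCast]
      simp only [hv]
      rw [hmod x hn, ← hm, conj_pow]
    · rintro ⟨⟨g, k⟩, hgk⟩
      refine ⟨g, ?_⟩
      rw [MonoidHom.map_zpowers, hgx g]
      have hyo : orderOf (g * x * g⁻¹) = n := horder g
      have hty : t = (g * x * g⁻¹) ^ ((k : ZMod n)).val := by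
        rw [← hgk, conj_pow]
      apply le_antisymm
      · rw [Subgroup.zpowers_le, hty]
        exact pow_mem (Subgroup.mem_zpowers _) _
      · rw [Subgroup.zpowers_le]
        have : (g * x * g⁻¹) = t ^ (((k⁻¹ : (ZMod n)ˣ) : ZMod n)).val := by
          rw [hty, hcancel _ hyo k]
        rw [this]
        exact pow_mem (Subgroup.mem_zpowers _) _
  obtain ⟨c, hcx⟩ := isConj_iff.mp hconj
  -- the generator-conjugacy set C
  set C : Set Γ := {t : Γ | ∃ g : Γ, Subgroup.zpowers t
      = Subgroup.map (MulAut.conj g).toMonoidHom (Subgroup.zpowers x)} with hCdef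
  set SS : Set (ZMod n)ˣ := {k : (ZMod n)ˣ | IsConj x (x ^ ((k : ZMod n).val))} with hSdef
  set P : Set (Γ × Γ) := {st : Γ × Γ | (∃ g : Γ, Subgroup.zpowers st.2 =
            Subgroup.map (MulAut.conj g).toMonoidHom (Subgroup.zpowers x)) ∧
          st.1 * st.2 * st.1⁻¹ = st.2 ^ p} with hPdef
  let F1 : ↥C → Type _ := fun t => {s : Γ // s * t.1 * s⁻¹ = t.1 ^ p}
  let F2 : ↥C → Type _ := fun t =>
      {gk : Γ × (ZMod n)ˣ // gk.1 * x ^ ((gk.2 : ZMod n)).val * gk.1⁻¹ = t.1}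
  have h1 : Nat.card ↥P = ∑ t : ↥C, Nat.card (F1 t) := by
    rw [← aux_nat_card_sigma]
    apply Nat.card_congr
    exact { toFun := fun st => ⟨⟨st.1.2, st.2.1⟩, ⟨st.1.1, st.2.2⟩⟩,
            invFun := fun ts => ⟨(ts.2.1, ts.1.1), ⟨ts.1.2, ts.2.2⟩⟩,
            left_inv := fun st => rfl,
            right_inv := fun ts => rfl }
  have hCmem : ∀ gk : Γ × (ZMod n)ˣ, (gk.1 * x ^ ((gk.2 : ZMod n)).val * gk.1⁻¹) ∈ C :=
    fun gk => (hCiff _).mpr ⟨gk, rfl⟩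
  have h2 : Nat.card (Γ × (ZMod n)ˣ) = ∑ t : ↥C, Nat.card (F2 t) := by
    rw [← aux_nat_card_sigma]
    apply Nat.card_congr
    refine ((Equiv.sigmaFiberEquiv
      (fun gk : Γ × (ZMod n)ˣ => (⟨_, hCmem gk⟩ : ↥C))).symm).trans ?_
    apply Equiv.sigmaCongrRight
    intro t
    exact Equiv.subtypeEquivRight (fun gk => by
      rw [Subtype.ext_iff])
  have h3 : ∀ t : ↥C, Nat.card (F1 t)
      = Nat.card (Subgroup.centralizer ({t.1} : Set Γ)) := by
    intro t
    apply aux_card_conj_set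
    obtain ⟨⟨g₀, k₀⟩, h₀⟩ := (hCiff t.1).mp t.2
    refine ⟨g₀ * c * g₀⁻¹, ?_⟩
    have key1 : c * x ^ ((k₀ : ZMod n)).val * c⁻¹ = (x ^ ((k₀ : ZMod n)).val) ^ p := by
      rw [← conj_pow, hcx, ← pow_mul, mul_comm, pow_mul]
    have expand : (g₀ * c * g₀⁻¹) * (g₀ * x ^ ((k₀ : ZMod n)).val * g₀⁻¹) * (g₀ * c * g₀⁻¹)⁻¹
        = g₀ * (c * x ^ ((k₀ : ZMod n)).val * c⁻¹) * g₀⁻¹ := by group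
    rw [← h₀, expand, key1, conj_pow]
  have h4 : ∀ t : ↥C, Nat.card (F2 t)
      = Nat.card ↥SS * Nat.card (Subgroup.centralizer ({t.1} : Set Γ)) := by
    intro t
    obtain ⟨⟨g₀, k₀⟩, h₀⟩ := (hCiff t.1).mp t.2
    have hq : ∀ gk : F2 t, (gk.1.2 * k₀⁻¹) ∈ SS := by
      rintro ⟨⟨g, k⟩, hg⟩
      simp only [hSdef, Set.mem_setOf_eq]
      rw [isConj_iff]
      have e1 : g * x ^ ((k : ZMod n)).val * g⁻¹ = g₀ * x ^ ((k₀ : ZMod n)).val * g₀⁻¹ := by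
        dsimp only at hg
        rw [hg, ← h₀]
      have e3 : (g₀⁻¹ * g) * x ^ ((k : ZMod n)).val * (g₀⁻¹ * g)⁻¹
          = x ^ ((k₀ : ZMod n)).val := by
        have := congrArg (fun z => g₀⁻¹ * z * g₀) e1
        simpa [mul_assoc] using this
      have e2 : (g₀⁻¹ * g) * x ^ (((k * k₀⁻¹ : (ZMod n)ˣ) : ZMod n)).val * (g₀⁻¹ * g)⁻¹
          = x := by
        calc (g₀⁻¹ * g) * x ^ (((k * k₀⁻¹ : (ZMod n)ˣ) : ZMod n)).val * (g₀⁻¹ * g)⁻¹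
            = (g₀⁻¹ * g) * (x ^ ((k : ZMod n)).val) ^ (((k₀⁻¹ : (ZMod n)ˣ) : ZMod n)).val
                * (g₀⁻¹ * g)⁻¹ := by
              rw [Units.val_mul, hmul x hn]
          _ = ((g₀⁻¹ * g) * x ^ ((k : ZMod n)).val * (g₀⁻¹ * g)⁻¹)
                ^ (((k₀⁻¹ : (ZMod n)ˣ) : ZMod n)).val := by rw [conj_pow]
          _ = (x ^ ((k₀ : ZMod n)).val) ^ (((k₀⁻¹ : (ZMod n)ˣ) : ZMod n)).val := by rw [e3]
          _ = x := hcancel x hn k₀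
      refine ⟨(g₀⁻¹ * g)⁻¹, ?_⟩
      have := congrArg (fun z => (g₀⁻¹ * g)⁻¹ * z * (g₀⁻¹ * g)) e2
      simpa [mul_assoc] using this.symm
    let q : F2 t → ↥SS := fun gk => ⟨gk.1.2 * k₀⁻¹, hq gk⟩
    have hF2 : Nat.card (F2 t) = ∑ j : ↥SS, Nat.card {gk : F2 t // q gk = j} := by
      rw [← aux_nat_card_sigma]
      exact Nat.card_congr (Equiv.sigmaFiberEquiv q).symm
    have hfib : ∀ j : ↥SS, Nat.card {gk : F2 t // q gk = j}
        = Nat.card (Subgroup.centralizer ({t.1} : Set Γ)) := by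
      intro j
      have e4 : Nat.card {gk : F2 t // q gk = j}
          = Nat.card {g : Γ //
              g * x ^ (((j.1 * k₀ : (ZMod n)ˣ) : ZMod n)).val * g⁻¹ = t.1} := by
        apply Nat.card_congr
        refine (Equiv.subtypeEquivRight (q := fun gk : F2 t => gk.1.2 * k₀⁻¹ = j.1)
          (fun gk => by rw [Subtype.ext_iff])).trans ?_
        refine (Equiv.subtypeSubtypeEquivSubtypeInter
          (fun gk : Γ × (ZMod n)ˣ => gk.1 * x ^ ((gk.2 : ZMod n)).val * gk.1⁻¹ = t.1)
          (fun gk : Γ × (ZMod n)ˣ => gk.2 * k₀⁻¹ = j.1)).trans ?_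
        refine (Equiv.subtypeEquivRight (q := fun gk : Γ × (ZMod n)ˣ =>
          (gk.1 * x ^ ((gk.2 : ZMod n)).val * gk.1⁻¹ = t.1) ∧ gk.2 = j.1 * k₀)
          (fun gk => and_congr Iff.rfl mul_inv_eq_iff_eq_mul)).trans ?_
        exact aux_prod_fix _ _
      obtain ⟨cj, hcj⟩ := isConj_iff.mp j.2
      have e5 : x ^ (((j.1 * k₀ : (ZMod n)ˣ) : ZMod n)).val
          = cj * x ^ ((k₀ : ZMod n)).val * cj⁻¹ := by
        rw [Units.val_mul, hmul x hn, ← hcj, conj_pow]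
      have hwit : (g₀ * cj⁻¹) * x ^ (((j.1 * k₀ : (ZMod n)ˣ) : ZMod n)).val
          * (g₀ * cj⁻¹)⁻¹ = t.1 := by
        rw [e5, ← h₀]; group
      rw [e4, aux_card_conj_set _ _ ⟨g₀ * cj⁻¹, hwit⟩, ← hwit,
        aux_card_centralizer_conj]
    rw [hF2]
    rw [Finset.sum_congr rfl (fun j _ => hfib j), Finset.sum_const, Finset.card_univ,
      smul_eq_mul]
    simp [Nat.card_eq_fintype_card]
  have key : Fintype.card Γ * Nat.card (ZMod n)ˣ = Nat.card ↥SS * Nat.card ↥P := by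
    calc Fintype.card Γ * Nat.card (ZMod n)ˣ = Nat.card (Γ × (ZMod n)ˣ) := by
          simp [Nat.card_eq_fintype_card]
      _ = ∑ t : ↥C, Nat.card (F2 t) := h2
      _ = ∑ t : ↥C, Nat.card ↥SS * Nat.card (Subgroup.centralizer ({t.1} : Set Γ)) := by
          exact Finset.sum_congr rfl (fun t _ => h4 t)
      _ = Nat.card ↥SS * ∑ t : ↥C, Nat.card (Subgroup.centralizer ({t.1} : Set Γ)) := by
          rw [Finset.mul_sum]
      _ = Nat.card ↥SS * ∑ t : ↥C, Nat.card (F1 t) := by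
          rw [Finset.sum_congr rfl (fun t _ => (h3 t))]
      _ = Nat.card ↥SS * Nat.card ↥P := by rw [h1]
  have hGpos : 0 < Fintype.card Γ := Fintype.card_pos
  have hSpos : 0 < Nat.card ↥SS := by
    have : (1 : (ZMod n)ˣ) ∈ SS := by
      simp only [hSdef, Set.mem_setOf_eq, Units.val_one, honep x hn]
      exact IsConj.refl x
    haveI : Nonempty ↥SS := ⟨⟨1, this⟩⟩
    exact Nat.card_pos
  have hkey : (Nat.card ↥P : ℚ) * (Nat.card ↥SS : ℚ)
      = (Fintype.card Γ : ℚ) * (Nat.card (ZMod n)ˣ : ℚ) := by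
    exact_mod_cast ((Nat.mul_comm _ _).trans key.symm)
  have hG0 : (Fintype.card Γ : ℚ) ≠ 0 := Nat.cast_ne_zero.mpr hGpos.ne'
  have hS0 : (Nat.card ↥SS : ℚ) ≠ 0 := Nat.cast_ne_zero.mpr hSpos.ne'
  rw [one_div, inv_mul_eq_div, div_eq_div_iff hG0 hS0]
  linear_combination hkey
end

section
/- The only pair of positive integers (L₂, L₃) satisfying both 1 + 2^{-L₂} + 2^{-L₃} = 1 + 2^{-2L₂} + 2·2^{-3L₂} + 2^{-L₃} and 1 + 3^{-L₂} + 3^{-L₃} = 1 + 3^{-L₂} + 2·3^{-2L₃} + 2·3^{-(L₂+L₃)} + 3·3^{-(L₂+2L₃)} (as equations in ℚ) is (L₂, L₃) = (1, 2). -/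
theorem s3_mass_equations_unique_solution (L₂ L₃ : ℕ) :
    (0 < L₂ ∧ 0 < L₃ ∧
      (1 : ℚ) + 2 ^ (-(L₂ : ℤ)) + 2 ^ (-(L₃ : ℤ)) =
        1 + 2 ^ (-(2 * L₂ : ℤ)) + 2 * 2 ^ (-(3 * L₂ : ℤ)) + 2 ^ (-(L₃ : ℤ)) ∧
      (1 : ℚ) + 3 ^ (-(L₂ : ℤ)) + 3 ^ (-(L₃ : ℤ)) =
        1 + 3 ^ (-(L₂ : ℤ)) + 2 * 3 ^ (-(2 * L₃ : ℤ))
          + 2 * 3 ^ (-(L₂ + L₃ : ℤ)) + 3 * 3 ^ (-(L₂ + 2 * L₃ : ℤ))) ↔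
    (L₂, L₃) = (1, 2) := by
  constructor
  · rintro ⟨h2, h3, e2, e3⟩
    have hrw2 : ∀ n : ℕ, (2:ℚ) ^ (-(n : ℤ)) = ((2:ℚ) ^ n)⁻¹ := fun n => by
      rw [zpow_neg, zpow_natCast]
    have hrw3 : ∀ n : ℕ, (3:ℚ) ^ (-(n : ℤ)) = ((3:ℚ) ^ n)⁻¹ := fun n => by
      rw [zpow_neg, zpow_natCast]
    -- first equation forces L₂ = 1
    have hL2 : L₂ = 1 := by
      rw [show (-(2 * L₂ : ℤ)) = (-((L₂ * 2 : ℕ) : ℤ)) by push_cast; ring,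
          show (-(3 * L₂ : ℤ)) = (-((L₂ * 3 : ℕ) : ℤ)) by push_cast; ring,
          hrw2, hrw2, hrw2, hrw2] at e2
      rw [pow_mul, pow_mul] at e2
      set x : ℚ := 2 ^ L₂ with hxdef
      have hx : (0:ℚ) < x := by positivity
      have h1 : x⁻¹ = (x ^ 2)⁻¹ + 2 * (x ^ 3)⁻¹ := by linarith [e2]
      field_simp at h1
      have hq : x ^ 2 = x + 2 :=
        mul_left_cancel₀ (pow_ne_zero 3 hx.ne') (by linear_combination x ^ 3 * h1)
      have hnat : (2:ℕ) ^ L₂ * 2 ^ L₂ = 2 ^ L₂ + 2 := by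
        have : ((2:ℕ) ^ L₂ * 2 ^ L₂ : ℚ) = ((2:ℕ) ^ L₂ + 2 : ℚ) := by
          push_cast [← hxdef]; nlinarith [hq]
        exact_mod_cast this
      have ht : (2:ℕ) ^ L₂ = 2 := by nlinarith [Nat.one_le_two_pow (n := L₂)]
      exact Nat.pow_right_injective (le_refl 2) (ht.trans (pow_one 2).symm)
    subst hL2
    -- second equation forces L₃ = 2
    have hL3 : L₃ = 2 := by
      rw [show (-(2 * L₃ : ℤ)) = (-((L₃ * 2 : ℕ) : ℤ)) by push_cast; ring,
          show (-((1:ℕ) + L₃ : ℤ)) = (-((1 + L₃ : ℕ) : ℤ)) by push_cast; ring,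
          show (-((1:ℕ) + 2 * L₃ : ℤ)) = (-((1 + L₃ * 2 : ℕ) : ℤ)) by push_cast; ring,
          hrw3, hrw3, hrw3, hrw3, hrw3] at e3
      rw [pow_mul, pow_add, pow_add, pow_mul, pow_one] at e3
      set s : ℚ := 3 ^ L₃ with hsdef
      have hs : (0:ℚ) < s := by positivity
      have h1 : s⁻¹ = 2 * (s ^ 2)⁻¹ + 2 * (3 * s)⁻¹ + 3 * (3 * s ^ 2)⁻¹ := by
        linarith [e3]
      field_simp at h1
      have hq : s = 9 := by
        have h2' := mul_left_cancel₀ (pow_ne_zero 4 hs.ne')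
          (show s ^ 4 * (3 * s) = s ^ 4 * 27 by linear_combination 3 * s ^ 4 * h1)
        linarith
      have hnat : (3:ℕ) ^ L₃ = 9 := by
        have : ((3:ℕ) ^ L₃ : ℚ) = (9 : ℚ) := by push_cast [← hsdef]; exact hq
        exact_mod_cast this
      exact Nat.pow_right_injective (by norm_num)
        (hnat.trans (show (9:ℕ) = 3 ^ 2 by norm_num))
    subst hL3
    rfl
  · rintro h
    rw [Prod.mk.injEq] at h
    obtain ⟨rfl, rfl⟩ := h
    norm_num
end

section
/- Let ℓ be a prime, t a positive integer, and B a positive integer. Suppose a₁, …, aₘ and c₁, …, cₜ are nonnegative integers with Σⱼ ℓ^{-aⱼ} = Σᵢ ℓ^{-cᵢ} in ℚ, where max aⱼ = B and some cᵢ ≥ 2B. Then B ≤ t − 1. -/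
lemma key_pow_sum (ℓ : ℕ) (hℓ : ℓ.Prime) :
    ∀ n : ℕ, ∀ k : ℕ, ∀ s : Multiset ℕ, s.card = n → (∀ e ∈ s, k ≤ e) → k ∈ s →
      ¬ ℓ ^ (k + n) ∣ (s.map (ℓ ^ ·)).sum := by
  intro n
  induction n using Nat.strong_induction_on with
  | _ n ih =>
    intro k s hcard hle hk hdvd
    have hℓ2 : 2 ≤ ℓ := hℓ.two_le
    set r := s.count k with hr
    have hr1 : 1 ≤ r := Multiset.one_le_count_iff_mem.mpr hk
    -- split s
    have hsplit : s.filter (fun e => e = k) + s.filter (fun e => ¬ e = k) = s :=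
      Multiset.filter_add_not _ s
    have hfil : s.filter (fun e => e = k) = Multiset.replicate r k := by
      rw [hr]; exact Multiset.filter_eq' s k
    set T := ((s.filter (fun e => ¬ e = k)).map (ℓ ^ ·)).sum with hT
    have hsum : (s.map (ℓ ^ ·)).sum = r * ℓ ^ k + T := by
      conv_lhs => rw [← hsplit]
      rw [Multiset.map_add, Multiset.sum_add, hfil, Multiset.map_replicate,
        Multiset.sum_replicate, smul_eq_mul]
    have hTdvd : ℓ ^ (k + 1) ∣ T := by
      refine Multiset.dvd_sum ?_
      intro x hx
      obtain ⟨e, he, rfl⟩ := Multiset.mem_map.mp hx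
      have he2 := Multiset.mem_filter.mp he
      have : k + 1 ≤ e := by
        have := hle e he2.1
        have := he2.2
        omega
      exact pow_dvd_pow ℓ this
    have hn1 : 1 ≤ n := by
      rw [← hcard]
      exact Multiset.card_pos.mpr (fun h => by simp [h] at hk)
    have hdvd1 : ℓ ^ (k + 1) ∣ T + r * ℓ ^ k := by
      have h := dvd_trans (pow_dvd_pow ℓ (show k + 1 ≤ k + n by omega)) hdvd
      rw [hsum] at h
      rwa [Nat.add_comm (r * ℓ ^ k) T] at h
    have hdvd2 : ℓ ^ (k + 1) ∣ r * ℓ ^ k := (Nat.dvd_add_right hTdvd).mp hdvd1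
    have hℓr : ℓ ∣ r := by
      have h0 : 0 < ℓ ^ k := pow_pos (by omega) k
      have : ℓ ^ k * ℓ ∣ ℓ ^ k * r := by
        rw [← pow_succ]
        rwa [mul_comm (ℓ ^ k) r]
      exact (Nat.mul_dvd_mul_iff_left h0).mp this
    set r' := r / ℓ with hr'
    have hrr' : r = ℓ * r' := (Nat.mul_div_cancel' hℓr).symm
    have hℓler : ℓ ≤ r := Nat.le_of_dvd (by omega) hℓr
    have hr'1 : 1 ≤ r' := (Nat.one_le_div_iff (by omega)).mpr hℓler
    have hr'lt : r' < r := Nat.div_lt_self (by omega) (by omega)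
    set q := (s.filter (fun e => ¬ e = k)).card with hq
    have hrq : r + q = n := by
      rw [← hcard, ← hsplit, Multiset.card_add, hfil, Multiset.card_replicate]
    set s' := Multiset.replicate r' (k + 1) + s.filter (fun e => ¬ e = k) with hs'
    have hcard' : s'.card = r' + q := by
      rw [hs', Multiset.card_add, Multiset.card_replicate]
    have hsum' : (s'.map (ℓ ^ ·)).sum = (s.map (ℓ ^ ·)).sum := by
      rw [hs', Multiset.map_add, Multiset.sum_add, Multiset.map_replicate,
        Multiset.sum_replicate, smul_eq_mul, hsum]
      congr 1
      rw [hrr', pow_succ]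
      ring
    have hlt : r' + q < n := by omega
    refine ih (r' + q) hlt (k + 1) s' hcard' ?_ ?_ ?_
    · intro e he
      rw [hs', Multiset.mem_add] at he
      rcases he with he | he
      · rw [Multiset.eq_of_mem_replicate he]
      · have h2 := Multiset.mem_filter.mp he
        have := hle e h2.1
        have := h2.2
        omega
    · rw [hs', Multiset.mem_add]
      left
      exact Multiset.mem_replicate.mpr ⟨by omega, rfl⟩
    · rw [hsum']
      exact dvd_trans (pow_dvd_pow ℓ (by omega)) hdvd

theorem valuation_bound_exponent_le
    (ℓ : ℕ) (hℓ : ℓ.Prime) (t : ℕ) (ht : 0 < t) (B : ℕ) (hB : 0 < B)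
    (m : ℕ) (a : Fin m → ℕ) (c : Fin t → ℕ)
    (hsum : ∑ j, (ℓ : ℚ) ^ (-(a j : ℤ)) = ∑ i, (ℓ : ℚ) ^ (-(c i : ℤ)))
    (hmax : ∀ j, a j ≤ B) (hattain : ∃ j, a j = B)
    (hbig : ∃ i, 2 * B ≤ c i) :
    B ≤ t - 1 := by
  have hℓ0 : (ℓ : ℚ) ≠ 0 := by
    exact_mod_cast hℓ.ne_zero
  obtain ⟨i₁, hi₁⟩ := hbig
  -- C = max of c
  set C := Finset.univ.sup c with hC
  have hle : ∀ i, c i ≤ C := fun i => Finset.le_sup (Finset.mem_univ i)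
  obtain ⟨i₀, _, hi₀⟩ := Finset.exists_mem_eq_sup Finset.univ
    (Finset.univ_nonempty_iff.mpr (by exact ⟨⟨0, ht⟩⟩)) c
  have hCB : 2 * B ≤ C := le_trans hi₁ (hle i₁)
  have haC : ∀ j, a j ≤ C := fun j => le_trans (hmax j) (by omega)
  -- key rewriting of terms
  have hterm : ∀ x : ℕ, x ≤ C →
      ((ℓ ^ (C - x) : ℕ) : ℚ) = (ℓ : ℚ) ^ (-(x : ℤ)) * (ℓ : ℚ) ^ (C : ℕ) := by
    intro x hx
    have h1 : (-(x : ℤ) + (C : ℕ)) = ((C - x : ℕ) : ℤ) := by omega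
    rw [← zpow_natCast (ℓ : ℚ) C, ← zpow_add₀ hℓ0, h1]
    push_cast
    rw [zpow_natCast]
  set N := ∑ j, ℓ ^ (C - a j) with hN
  set M := ∑ i, ℓ ^ (C - c i) with hM
  have hNM : N = M := by
    have : ((N : ℕ) : ℚ) = ((M : ℕ) : ℚ) := by
      rw [hN, hM]
      push_cast [Nat.cast_sum]
      calc (∑ j, ((ℓ : ℚ) ^ (C - a j) : ℚ))
          = ∑ j, (ℓ : ℚ) ^ (-(a j : ℤ)) * (ℓ : ℚ) ^ (C : ℕ) := by
            refine Finset.sum_congr rfl fun j _ => ?_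
            have := hterm (a j) (haC j)
            push_cast at this
            exact this
        _ = (∑ j, (ℓ : ℚ) ^ (-(a j : ℤ))) * (ℓ : ℚ) ^ (C : ℕ) := by
            rw [Finset.sum_mul]
        _ = (∑ i, (ℓ : ℚ) ^ (-(c i : ℤ))) * (ℓ : ℚ) ^ (C : ℕ) := by rw [hsum]
        _ = ∑ i, (ℓ : ℚ) ^ (-(c i : ℤ)) * (ℓ : ℚ) ^ (C : ℕ) := by
            rw [Finset.sum_mul]
        _ = ∑ i, ((ℓ : ℚ) ^ (C - c i) : ℚ) := by
            refine Finset.sum_congr rfl fun i _ => ?_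
            have := hterm (c i) (hle i)
            push_cast at this
            exact this.symm
    exact_mod_cast this
  -- divisibility of N
  have hdvdN : ℓ ^ (C - B) ∣ N := by
    refine Finset.dvd_sum fun j _ => pow_dvd_pow ℓ ?_
    have := hmax j
    omega
  -- not divisibility of M
  have hnot : ¬ ℓ ^ t ∣ M := by
    set s : Multiset ℕ := Finset.univ.val.map (fun i => C - c i) with hs
    have hcard : s.card = t := by
      rw [hs, Multiset.card_map, Finset.card_val, Finset.card_univ, Fintype.card_fin]
    have h0mem : 0 ∈ s := by
      rw [hs, Multiset.mem_map]
      exact ⟨i₀, Finset.mem_univ_val i₀, by omega⟩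
    have hkey := key_pow_sum ℓ hℓ t 0 s hcard (fun e _ => Nat.zero_le e) h0mem
    rw [Nat.zero_add] at hkey
    intro hdvd
    apply hkey
    have : (s.map (ℓ ^ ·)).sum = M := by
      rw [hs, Multiset.map_map, hM, Finset.sum]
      rfl
    rwa [this]
  have hlt : C - B < t := by
    by_contra h
    push_neg at h
    exact hnot (dvd_trans (pow_dvd_pow ℓ h) (hNM ▸ hdvdN))
  omega
end
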